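/- arXiv:2310.05579 — 2 statements merged into one kernel-verified Lean document; each statement's English description precedes it below -/
import Mathlib

section
/- Let G be a finite group and H ≤ G a subgroup with a linear character β of H such that the induced character β^G is a faithful irreducible character of G with β^G(1) = m(G). Then G is metabelian, i.e., G'' = 1. -/
open scoped BigOperators
open CategoryTheory

noncomputable section

/-- `χ : G → ℂ` is the character of some finite-dimensional complex representation. -/
def IsChar (G : Type) [Group G] (χ : G → ℂ) : Prop :=
  ∃ V : FDRep ℂ G, χ = V.character

/-- `χ : G → ℂ` is the character of an irreducible (simple) finite-dimensional
complex representation. -/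
def IsIrrChar (G : Type) [Group G] (χ : G → ℂ) : Prop :=
  ∃ V : FDRep ℂ G, Simple V ∧ χ = V.character

/-- The minimal degree `m(G)` of a non-linear irreducible complex character of `G`. -/
def minDeg (G : Type) [Group G] : ℕ :=
  sInf {n : ℕ | 1 < n ∧ ∃ χ : G → ℂ, IsIrrChar G χ ∧ χ 1 = (n : ℂ)}

/-- The kernel of a character, as a set: `{g | χ g = χ 1}`. -/
def charKerSet {G : Type} [Group G] (χ : G → ℂ) : Set G := {g | χ g = χ 1}

/-- The kernel of (the representation affording) a character, as a subgroup. -/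
def repKer {G : Type} [Group G] (V : FDRep ℂ G) : Subgroup G :=
  (Representation.asGroupHom V.ρ).ker

instance {G : Type} [Group G] (V : FDRep ℂ G) : (repKer V).Normal :=
  (Representation.asGroupHom V.ρ).normal_ker

open Classical in
/-- The character of `G` induced from the class function `β` of the subgroup `H`. -/
def indChar {G : Type} [Group G] [Fintype G] (H : Subgroup G) (β : H → ℂ) : G → ℂ :=
  fun g => (Nat.card H : ℂ)⁻¹ *
    ∑ x : G, if h : x⁻¹ * g * x ∈ H then β ⟨x⁻¹ * g * x, h⟩ else 0

/-- A character of `G` is primitive if it is not induced from a character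
of a proper subgroup. -/
def IsPrimitiveChar (G : Type) [Group G] [Fintype G] (χ : G → ℂ) : Prop :=
  ∀ H : Subgroup G, H ≠ ⊤ → ∀ β : H → ℂ, IsChar H β → indChar H β ≠ χ

/-- The usual inner product of class functions. -/
def charInner (G : Type) [Group G] [Fintype G] (φ ψ : G → ℂ) : ℂ :=
  (Nat.card G : ℂ)⁻¹ * ∑ g : G, φ g * (starRingEnd ℂ) (ψ g)

/-- `χ` is a sum of linear characters of `G`. -/
def IsSumOfLinear (G : Type) [Group G] (χ : G → ℂ) : Prop :=
  ∃ s : Multiset (G → ℂ), (∀ β ∈ s, IsChar G β ∧ β 1 = 1) ∧ χ = s.sum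

/-- The Fitting subgroup: the join of all nilpotent normal subgroups. -/
def fittingSubgroup (G : Type) [Group G] : Subgroup G :=
  ⨆ (N : Subgroup G) (_ : N.Normal) (_ : Group.IsNilpotent N), N

/-- `O_p(G)`: the join of all normal `p`-subgroups. -/
def pCore (p : ℕ) (G : Type) [Group G] : Subgroup G :=
  ⨆ (N : Subgroup G) (_ : N.Normal) (_ : IsPGroup p N), N

/-- An extraspecial `p`-group: `Z(P) = P' = Φ(P)` has order `p`. -/
def IsExtraspecial (p : ℕ) (P : Type) [Group P] : Prop :=
  IsPGroup p P ∧ Subgroup.center P = commutator P ∧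
    Subgroup.center P = frattini P ∧ Nat.card (Subgroup.center P) = p

/-!
Since `β` is linear, `β^G(1) = [G:H]`, so `[G:H] = m(G)`. Every irreducible constituent of
the permutation module `ℂ[G/H]` then has degree `1`: one of degree at least `2` would have
degree `m(G) = dim ℂ[G/H]`, hence be all of `ℂ[G/H]`, which however contains the trivial line.
By Maschke's theorem `ℂ[G/H]` is the sum of these lines, on which commutators act trivially;
so `G'` fixes every coset and `G' ≤ H`. As `β` is a homomorphism on `H`, it is trivial on
`H' ⊇ G''`, so the normal subgroup `G''` lies in the kernel of `β^G`, which is trivial.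
-/

open Module

namespace LinearMap

variable {K M : Type} [Field K] [AddCommGroup M] [Module K M]

theorem eq_trace_smul_id_of_finrank_eq_one (h : finrank K M = 1) (f : M →ₗ[K] M) :
    f = trace K M f • LinearMap.id := by
  have : FiniteDimensional K M := .of_finrank_pos (by omega)
  obtain ⟨c, rfl, -⟩ := existsUnique_eq_smul_id_of_finrank_eq_one h f
  simp [trace_id, h]

theorem trace_mul_of_finrank_eq_one (h : finrank K M = 1) (f g : M →ₗ[K] M) :
    trace K M (f * g) = trace K M f * trace K M g := by
  have : FiniteDimensional K M := .of_finrank_pos (by omega)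
  obtain ⟨a, rfl, -⟩ := existsUnique_eq_smul_id_of_finrank_eq_one h f
  obtain ⟨b, rfl, -⟩ := existsUnique_eq_smul_id_of_finrank_eq_one h g
  simp [Module.End.mul_eq_comp, trace_id, h, mul_comm]

end LinearMap

theorem MonoidHom.commutator_le_ker {G M : Type*} [Group G] [CommMonoid M] (f : G →* M) :
    commutator G ≤ f.ker := by
  simpa only [MonoidHom.ker_toHomUnits] using Abelianization.commutator_subset_ker f.toHomUnits

namespace Representation

variable {k G V : Type} [Field k] [Group G] [AddCommGroup V] [Module k V]

theorem character_mul_of_finrank_eq_one (ρ : Representation k G V) (h : finrank k V = 1)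
    (g g' : G) : ρ.character (g * g') = ρ.character g * ρ.character g' := by
  simp only [character, map_mul, LinearMap.trace_mul_of_finrank_eq_one h]

theorem commutator_le_ker_of_finrank_eq_one (ρ : Representation k G V) (h : finrank k V = 1) :
    commutator G ≤ MonoidHom.ker ρ := by
  have : FiniteDimensional k V := .of_finrank_pos (by omega)
  let χ : G →* k :=
    { toFun := ρ.character
      map_one' := by rw [char_one, h, Nat.cast_one]
      map_mul' := ρ.character_mul_of_finrank_eq_one h }
  intro g hg
  have hχ : LinearMap.trace k V (ρ g) = 1 := χ.commutator_le_ker hg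
  rw [MonoidHom.mem_ker, LinearMap.eq_trace_smul_id_of_finrank_eq_one h (ρ g), hχ, one_smul]
  rfl

end Representation

namespace Subrepresentation

variable {k G V : Type} [Field k] [Group G] [AddCommGroup V] [Module k V]
  {ρ : Representation k G V}

theorem isIrreducible_toRepresentation {σ : Subrepresentation ρ} (hσ : IsAtom σ) :
    σ.toRepresentation.IsIrreducible := by
  let image (τ : Subrepresentation σ.toRepresentation) : Subrepresentation ρ :=
    ⟨τ.toSubmodule.map σ.toSubmodule.subtype, fun g => by
      rintro _ ⟨w, hw, rfl⟩
      exact ⟨_, τ.apply_mem_toSubmodule g hw, rfl⟩⟩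
  have mem_image (τ) (v : σ.toSubmodule) (hv : v ∈ τ) : (v : V) ∈ image τ :=
    ⟨v, hv, rfl⟩
  refine
    { exists_pair_ne := ⟨⊥, ⊤, fun hbot => hσ.1 ?_⟩
      eq_bot_or_eq_top := fun τ => ?_ }
  · refine eq_bot_iff.mpr fun v hv => ?_
    have : (⟨v, hv⟩ : σ.toSubmodule) ∈ (⊥ : Subrepresentation σ.toRepresentation) :=
      hbot ▸ Submodule.mem_top
    exact congrArg Subtype.val ((Submodule.mem_bot k).mp this)
  rcases hσ.le_iff.mp (show image τ ≤ σ from fun _ ⟨w, _, hw⟩ => hw ▸ w.2) with h | h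
  · refine .inl (eq_bot_iff.mpr fun v hv => ?_)
    have := mem_image τ v hv
    rw [h] at this
    exact (Submodule.mem_bot k).mpr (Subtype.ext ((Submodule.mem_bot k).mp this))
  · refine .inr (eq_top_iff.mpr fun v _ => ?_)
    obtain ⟨w, hw, hwv⟩ : (v : V) ∈ image τ := by rw [h]; exact v.2
    exact Subtype.ext hwv ▸ hw

variable [Finite G] [NeZero (Nat.card G : k)]

theorem eq_top_of_forall_isAtom_le {F : Subrepresentation ρ} (h : ∀ σ, IsAtom σ → σ ≤ F) :
    F = ⊤ := by
  let e := subrepresentationSubmoduleOrderIso (ρ := ρ)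
  suffices e F = ⊤ from (map_eq_top_iff e).mp this
  refine eq_top_iff.mpr (sSup_atoms_eq_top (α := Submodule (MonoidAlgebra k G) ρ.asModule) ▸
    sSup_le fun S hS => ?_)
  exact e.symm_apply_le.mp (h _ ((e.symm.isAtom_iff S).mpr hS))

end Subrepresentation

namespace Representation

variable {k G V : Type} [Field k] [Group G] [AddCommGroup V] [Module k V]

theorem commutator_le_ker_of_forall_isAtom [Finite G] [NeZero (Nat.card G : k)]
    (ρ : Representation k G V)
    (h : ∀ σ : Subrepresentation ρ, IsAtom σ → finrank k σ.toSubmodule = 1) :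
    commutator G ≤ MonoidHom.ker ρ := by
  let F : Subrepresentation ρ :=
    ⟨invariants (ρ.comp (commutator G).subtype), fun g _ hv => le_comap_invariants ρ _ g hv⟩
  have hF : F = ⊤ := Subrepresentation.eq_top_of_forall_isAtom_le fun σ hσ v hv ⟨n, hn⟩ =>
    congrArg Subtype.val <| LinearMap.congr_fun
      (σ.toRepresentation.commutator_le_ker_of_finrank_eq_one (h σ hσ) hn) ⟨v, hv⟩
  intro g hg
  refine LinearMap.ext fun v => ?_
  have hv : v ∈ F := hF ▸ Submodule.mem_top
  exact hv ⟨g, hg⟩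

theorem exists_subrepresentation_ofMulAction_finrank_eq_one (X : Type) [MulAction G X]
    [Finite X] [Nonempty X] :
    ∃ L : Subrepresentation (ofMulAction k G X), finrank k L.toSubmodule = 1 := by
  let c : MonoidAlgebra k X := MonoidAlgebra.ofCoeff (Finsupp.equivFunOnFinite.symm 1)
  have hc : c ≠ 0 := fun h0 => by
    simpa [c] using congrArg (MonoidAlgebra.coeff · (Classical.arbitrary X)) h0
  have hfix (g : G) : ofMulAction k G X g c = c := by
    ext x
    simp [c, coeff_ofMulAction]
  refine ⟨⟨Submodule.span k {c}, fun g v hv => ?_⟩, finrank_span_singleton hc⟩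
  obtain ⟨t, rfl⟩ := Submodule.mem_span_singleton.mp hv
  rw [map_smul, hfix]
  exact Submodule.smul_mem _ t (Submodule.mem_span_singleton_self c)

end Representation

section minDeg

variable {G V : Type} [Group G] [Finite G] [AddCommGroup V] [Module ℂ V]
  [FiniteDimensional ℂ V]

theorem FDRep.simple_of_isIrreducible {k : Type} [Field k] [IsAlgClosed k]
    [NeZero (Nat.card G : k)] {W : Type} [AddCommGroup W] [Module k W] [FiniteDimensional k W]
    (ρ : Representation k G W) [ρ.IsIrreducible] : Simple (FDRep.of ρ) := by
  rw [FDRep.simple_iff_end_is_rank_one, ← (FDRep.forget₂HomLinearEquiv _ _).finrank_eq,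
    (Rep.homLinearEquiv _ _).finrank_eq]
  exact Representation.IsIrreducible.finrank_intertwiningMap_self ρ

theorem minDeg_le_finrank_of_isAtom {ρ : Representation ℂ G V} {σ : Subrepresentation ρ}
    (hσ : IsAtom σ) (h : 1 < finrank ℂ σ.toSubmodule) :
    minDeg G ≤ finrank ℂ σ.toSubmodule := by
  have := Subrepresentation.isIrreducible_toRepresentation hσ
  exact Nat.sInf_le ⟨h, (FDRep.of σ.toRepresentation).character,
    ⟨_, FDRep.simple_of_isIrreducible _, rfl⟩, FDRep.char_one _⟩

theorem finrank_eq_one_of_isAtom_of_finrank_le_minDeg {ρ : Representation ℂ G V}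
    (hV : finrank ℂ V ≤ minDeg G)
    (hL : ∃ L : Subrepresentation ρ, finrank ℂ L.toSubmodule = 1)
    {σ : Subrepresentation ρ} (hσ : IsAtom σ) : finrank ℂ σ.toSubmodule = 1 := by
  obtain ⟨L, hL⟩ := hL
  by_contra hne
  have hpos : finrank ℂ σ.toSubmodule ≠ 0 := fun h0 =>
    hσ.1 (Subrepresentation.toSubmodule_injective (Submodule.finrank_eq_zero.mp h0))
  have htop : σ.toSubmodule = ⊤ := Submodule.eq_top_of_finrank_eq <| le_antisymm
    (Submodule.finrank_le _) (hV.trans (minDeg_le_finrank_of_isAtom hσ (by omega)))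
  have hLne : L ≠ ⊥ := fun hbot =>
    one_ne_zero (hL.symm.trans (Submodule.finrank_eq_zero.mpr (congrArg (·.toSubmodule) hbot)))
  have hLσ : L = σ :=
    (hσ.le_iff.mp fun v _ => (htop ▸ Submodule.mem_top :)).resolve_left hLne
  exact hne (hLσ ▸ hL)

theorem commutator_le_of_index_le_minDeg (H : Subgroup G) (h : H.index ≤ minDeg G) :
    commutator G ≤ H := by
  let π := Representation.ofMulAction ℂ G (G ⧸ H)
  have hdim : finrank ℂ (MonoidAlgebra ℂ (G ⧸ H)) = H.index :=
    finrank_eq_nat_card_basis (MonoidAlgebra.basis (G ⧸ H) ℂ)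
  intro g hg
  have hπ : π g = 1 := π.commutator_le_ker_of_forall_isAtom (fun σ hσ =>
    finrank_eq_one_of_isAtom_of_finrank_le_minDeg (hdim ▸ h)
      (Representation.exists_subrepresentation_ofMulAction_finrank_eq_one _) hσ) hg
  have hsingle := LinearMap.congr_fun hπ (MonoidAlgebra.single ((1 : G) : G ⧸ H) 1)
  rw [Representation.ofMulAction_single, Module.End.one_apply,
    MonoidAlgebra.single_left_inj one_ne_zero] at hsingle
  rw [← MulAction.stabilizer_quotient H]
  exact hsingle

end minDeg

section Characters

variable {G : Type} [Group G]

theorem IsChar.map_mul_of_map_one {χ : G → ℂ} (hχ : IsChar G χ) (h1 : χ 1 = 1) (g g' : G) :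
    χ (g * g') = χ g * χ g' := by
  obtain ⟨V, rfl⟩ := hχ
  have hdim : finrank ℂ V = 1 := by exact_mod_cast (FDRep.char_one V).symm.trans h1
  exact Representation.character_mul_of_finrank_eq_one V.ρ hdim g g'

theorem IsChar.eq_one_of_mem_commutator {χ : G → ℂ} (hχ : IsChar G χ) (h1 : χ 1 = 1) {g : G}
    (hg : g ∈ commutator G) : χ g = 1 :=
  MonoidHom.commutator_le_ker ⟨⟨χ, h1⟩, hχ.map_mul_of_map_one h1⟩ hg

variable [Fintype G] (H : Subgroup G) (β : H → ℂ)

theorem indChar_eq_index_mul {g : G}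
    (hg : ∀ x : G, ∃ h : x⁻¹ * g * x ∈ H, β ⟨_, h⟩ = β 1) :
    indChar H β g = H.index * β 1 := by
  classical
  have hterm (x : G) : (if h : x⁻¹ * g * x ∈ H then β ⟨_, h⟩ else 0) = β 1 := by
    obtain ⟨h, hβ⟩ := hg x
    rw [dif_pos h, hβ]
  have hH : (Nat.card H : ℂ) ≠ 0 := Nat.cast_ne_zero.mpr Nat.card_pos.ne'
  rw [indChar, Finset.sum_congr rfl fun x _ => hterm x, Finset.sum_const, Finset.card_univ,
    nsmul_eq_mul, ← Nat.card_eq_fintype_card, ← H.card_mul_index, Nat.cast_mul]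
  field_simp

theorem indChar_one : indChar H β 1 = H.index * β 1 :=
  indChar_eq_index_mul H β fun x => ⟨by simp, by congr 1; ext; simp⟩

theorem subset_charKerSet_indChar (N : Subgroup G) [N.Normal]
    (hN : ∀ n ∈ N, ∃ h : n ∈ H, β ⟨n, h⟩ = β 1) :
    (N : Set G) ⊆ charKerSet (indChar H β) := fun g hg => by
  rw [charKerSet, Set.mem_ofPred_eq, indChar_one]
  exact indChar_eq_index_mul H β fun x => hN _ (by simpa using ‹N.Normal›.conj_mem g hg x⁻¹)

end Characters

theorem stmt6_general (G : Type) [Group G] [Fintype G] (H : Subgroup G) (β : ↥H → ℂ)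
    (hβ : IsChar ↥H β) (hlin : β 1 = 1)
    (hfaith : charKerSet (indChar H β) = {(1 : G)})
    (hdeg : indChar H β 1 = (minDeg G : ℂ)) :
    derivedSeries G 2 = ⊥ := by
  have hindex : H.index = minDeg G := by
    rw [indChar_one, hlin, mul_one] at hdeg
    exact_mod_cast hdeg
  have hG' : commutator G ≤ H := commutator_le_of_index_le_minDeg H hindex.le
  have hG'' : derivedSeries G 2 ≤ (commutator H).map H.subtype := by
    rw [derivedSeries_succ, derivedSeries_one, Subgroup.map_subtype_commutator]
    exact Subgroup.commutator_mono hG' hG'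
  have hker := subset_charKerSet_indChar H β (derivedSeries G 2) fun n hn => by
    obtain ⟨h, hh, rfl⟩ := hG'' hn
    exact ⟨h.2, hlin ▸ hβ.eq_one_of_mem_commutator hlin hh⟩
  rw [hfaith] at hker
  exact (Subgroup.eq_bot_iff_forall _).mpr fun g hg => hker hg

/-- If a faithful irreducible minimal character of `G` is induced from a linear
character of a subgroup, then `G` is metabelian. -/
theorem stmt6 (G : Type) [Group G] [Fintype G] (H : Subgroup G) (β : ↥H → ℂ)
    (hβ : IsChar ↥H β) (hlin : β 1 = 1)
    (hirr : IsIrrChar G (indChar H β)) (hfaith : charKerSet (indChar H β) = {(1 : G)})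
    (hdeg : indChar H β 1 = (minDeg G : ℂ)) :
    derivedSeries G 2 = ⊥ :=
  stmt6_general G H β hβ hlin hfaith hdeg
end
end

section
/- Let G be a finite group and α a non-linear irreducible character of G such that α·conj(α) (the product of α with its complex conjugate) is a sum of linear characters. Then G' ≤ Z(α) := {g ∈ G : |α(g)| = α(1)}, and G/Ker(α) is nilpotent of class at most 2. -/
open scoped BigOperators
open CategoryTheory

noncomputable section

/-!
Since `α ᾱ` is a sum of linear characters and linear characters are trivial on `G'`, the
function `|α|²` is constant on `G'`, so `|α(g)| = α(1)` there. For such `g` the eigenvalues of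
`ρ(g)` are roots of unity whose sum has absolute value equal to their number, so they all
coincide; as `ρ(g)` has finite order it is diagonalizable, hence scalar. Scalars are central,
so `G'` maps into the centre of `G / Ker α`.
-/

open Polynomial Module ComplexConjugate

lemma Complex.exists_forall_eq_of_norm_multiset_sum_eq_card {T : Multiset ℂ}
    (hT : ∀ z ∈ T, ‖z‖ ≤ 1) (hsum : ‖T.sum‖ = Multiset.card T) : ∃ u, ∀ z ∈ T, z = u := by
  rcases eq_or_ne T 0 with rfl | hT0
  · simp
  set n : ℝ := (Multiset.card T : ℝ)
  have hn : n ≠ 0 := by simpa [n] using hT0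
  set u := T.sum / n
  have hu : ‖u‖ = 1 := by
    rw [norm_div, hsum, Complex.norm_real, Real.norm_of_nonneg (by positivity), div_self hn]
  -- With `u` the mean of `T`, each `re (z * conj u)` is at most `1` and together they add up to
  -- `re (T.sum * conj u) = n`; so all equal `1`, which forces `z = u`.
  have hle : ∀ z ∈ T, (z * conj u).re ≤ 1 := fun z hz =>
    calc (z * conj u).re ≤ ‖z * conj u‖ := Complex.re_le_norm _
      _ ≤ 1 := by simpa [hu] using hT z hz
  have hsum_re : (T.map fun z => (z * conj u).re).sum = n := by
    have hre_sum := map_multiset_sum Complex.reAddGroupHom (T.map fun z => z * conj u)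
    simp only [Multiset.map_map, Function.comp_def, Complex.coe_reAddGroupHom] at hre_sum
    rw [← hre_sum, Multiset.sum_map_mul_right, Multiset.map_id',
      (mul_div_cancel₀ T.sum (Complex.ofReal_ne_zero.mpr hn)).symm, mul_assoc, Complex.mul_conj,
      Complex.normSq_eq_norm_sq, hu]
    simp
  have hre : ∀ z ∈ T, (z * conj u).re = 1 := by
    by_contra! hlt
    obtain ⟨z, hz, hzlt⟩ := hlt
    have := Multiset.sum_lt_sum (s := T) hle ⟨z, hz, lt_of_le_of_ne (hle z hz) hzlt⟩
    rw [hsum_re] at this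
    simp [n] at this
  refine ⟨u, fun z hz => ?_⟩
  have hdist : ‖z - u‖ ^ 2 ≤ 0 := by
    have h := Complex.normSq_sub z u
    simp only [Complex.normSq_eq_norm_sq, hu, hre z hz] at h
    nlinarith [hT z hz, norm_nonneg z]
  exact sub_eq_zero.mp (norm_eq_zero.mp (pow_eq_zero_iff two_ne_zero |>.mp
    (le_antisymm hdist (sq_nonneg _))))

lemma Module.End.pow_eq_one_of_mem_roots_charpoly {K V : Type*} [Field K] [AddCommGroup V]
    [Module K V] [FiniteDimensional K V] {f : End K V} {m : ℕ} (hf : f ^ m = 1) {μ : K}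
    (hμ : μ ∈ f.charpoly.roots) : μ ^ m = 1 := by
  obtain ⟨v, hv⟩ := ((f.hasEigenvalue_iff_isRoot_charpoly μ).mpr
    (isRoot_of_mem_roots hμ)).exists_hasEigenvector
  have hvm := hv.pow_apply m
  rw [hf, End.one_apply] at hvm
  exact smul_left_injective K hv.2 (hvm.symm.trans (one_smul K v).symm)

lemma Module.End.eq_algebraMap_of_pow_eq_one_of_norm_trace_eq_finrank {V : Type*} [AddCommGroup V]
    [Module ℂ V] [FiniteDimensional ℂ V] {f : End ℂ V} {m : ℕ} (hm : m ≠ 0) (hf : f ^ m = 1)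
    (htr : ‖LinearMap.trace ℂ V f‖ = finrank ℂ V) : ∃ u : ℂ, f = algebraMap ℂ (End ℂ V) u := by
  have hsplit := IsAlgClosed.splits f.charpoly
  have hcard : Multiset.card f.charpoly.roots = finrank ℂ V := by
    rw [← LinearMap.charpoly_natDegree f, splits_iff_card_roots.mp hsplit]
  obtain ⟨u, hu⟩ := Complex.exists_forall_eq_of_norm_multiset_sum_eq_card
    (fun μ hμ => (Complex.norm_eq_one_of_pow_eq_one
      (f.pow_eq_one_of_mem_roots_charpoly hf hμ) hm).le)
    (by rw [← End.trace_eq_sum_roots_charpoly_of_splits hsplit, htr, hcard])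
  have hcharpoly : f.charpoly = (X - C u) ^ finrank ℂ V := by
    rw [hsplit.eq_prod_roots_of_monic f.charpoly_monic, Multiset.eq_replicate.mpr ⟨hcard, hu⟩,
      Multiset.map_replicate, Multiset.prod_replicate]
  have hnil : IsNilpotent (f - algebraMap ℂ (End ℂ V) u) :=
    ⟨finrank ℂ V, by simpa [hcharpoly] using f.aeval_self_charpoly⟩
  have hss : f.IsSemisimple := by
    refine End.isSemisimple_of_squarefree_aeval_eq_zero
      (separable_X_pow_sub_C (1 : ℂ) (by exact_mod_cast hm) one_ne_zero).squarefree ?_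
    simp [hf]
  exact ⟨u, sub_eq_zero.mp (End.eq_zero_of_isNilpotent_isSemisimple hnil (by simpa using hss))⟩

lemma LinearMap.trace_mul_of_finrank_eq_one_s10 {k W : Type*} [Field k] [AddCommGroup W] [Module k W]
    [FiniteDimensional k W] (h : finrank k W = 1) (f g : End k W) :
    LinearMap.trace k W (f * g) = LinearMap.trace k W f * LinearMap.trace k W g := by
  obtain ⟨c, rfl, -⟩ := g.existsUnique_eq_smul_id_of_finrank_eq_one h
  simp [Module.End.mul_eq_comp, h, mul_comm]

lemma FDRep.character_eq_one_of_mem_commutator {k G : Type} [Field k] [CharZero k] [Group G]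
    {W : FDRep k G} (h1 : W.character 1 = 1) {g : G} (hg : g ∈ commutator G) :
    W.character g = 1 := by
  have hdim : finrank k W = 1 := by exact_mod_cast (W.char_one).symm.trans h1
  let χ : G →* k :=
    { toFun := W.character
      map_one' := h1
      map_mul' := fun x y => by
        simp only [FDRep.character, map_mul]
        exact LinearMap.trace_mul_of_finrank_eq_one_s10 hdim _ _ }
  simpa [Units.ext_iff, χ] using Abelianization.commutator_subset_ker χ.toHomUnits hg

lemma IsSumOfLinear.apply_eq_apply_one {G : Type} [Group G] {ψ : G → ℂ}
    (hψ : IsSumOfLinear G ψ) {g : G} (hg : g ∈ commutator G) : ψ g = ψ 1 := by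
  obtain ⟨s, hs, rfl⟩ := hψ
  rw [Pi.multiset_sum_apply, Pi.multiset_sum_apply]
  refine congrArg Multiset.sum (Multiset.map_congr rfl fun β hβ => ?_)
  obtain ⟨⟨W, rfl⟩, h1⟩ := hs β hβ
  rw [h1, FDRep.character_eq_one_of_mem_commutator h1 hg]

lemma FDRep.asGroupHom_mem_center_of_norm_character_eq {G : Type} [Group G] [Finite G]
    (V : FDRep ℂ G) {g : G} (hg : ‖V.character g‖ = ‖V.character 1‖) :
    Representation.asGroupHom V.ρ g ∈ Subgroup.center (End ℂ V)ˣ := by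
  have hpow : V.ρ g ^ orderOf g = 1 := by rw [← map_pow, pow_orderOf_eq_one, map_one]
  have htr : ‖LinearMap.trace ℂ V (V.ρ g)‖ = finrank ℂ V := by
    rwa [V.char_one, Complex.norm_natCast] at hg
  obtain ⟨u, hu⟩ :=
    End.eq_algebraMap_of_pow_eq_one_of_norm_trace_eq_finrank (orderOf_pos g).ne' hpow htr
  refine Subgroup.mem_center_iff.mpr fun w => Units.ext ?_
  simp [Representation.asGroupHom_apply, hu, Algebra.commutes]

lemma MonoidHom.mk_mem_center_of_map_mem_center {G H : Type*} [Group G] [Group H] (φ : G →* H)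
    {a : G} (ha : φ a ∈ Subgroup.center H) :
    (a : G ⧸ φ.ker) ∈ Subgroup.center (G ⧸ φ.ker) := by
  refine Subgroup.mem_center_iff.mpr fun q => QuotientGroup.kerLift_injective φ ?_
  simpa [map_mul] using Subgroup.mem_center_iff.mp ha (QuotientGroup.kerLift φ q)

lemma Subgroup.lowerCentralSeries_two_eq_bot_of_commutator_le_center {G : Type*} [Group G]
    (h : _root_.commutator G ≤ center G) : (⊤ : Subgroup G).lowerCentralSeries 2 = ⊥ :=
  eq_bot_iff.mpr ((commutator_mono h le_rfl).trans (commutator_center_left ⊤).le)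

lemma QuotientGroup.commutator_le_center_of_mk_mem_center {G : Type*} [Group G]
    (N : Subgroup G) [N.Normal]
    (h : ∀ a ∈ commutator G, (a : G ⧸ N) ∈ Subgroup.center (G ⧸ N)) :
    commutator (G ⧸ N) ≤ Subgroup.center (G ⧸ N) := by
  rw [commutator, ← Subgroup.map_top_of_surjective _ (QuotientGroup.mk'_surjective N),
    ← Subgroup.map_commutator]
  exact Subgroup.map_le_iff_le_comap.mpr h

theorem stmt10_general (G : Type) [Group G] [Fintype G]
    (V : FDRep ℂ G)
    (hsum : IsSumOfLinear G (fun g => V.character g * (starRingEnd ℂ) (V.character g))) :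
    (↑(commutator G) : Set G) ⊆
        {g : G | ‖V.character g‖ = ‖V.character 1‖} ∧
      (⊤ : Subgroup (G ⧸ repKer V)).lowerCentralSeries 2 = ⊥ := by
  have hnorm : ∀ g ∈ commutator G, ‖V.character g‖ = ‖V.character 1‖ := fun g hg => by
    have h := hsum.apply_eq_apply_one hg
    simp only [Complex.mul_conj, Complex.ofReal_inj] at h
    rw [Complex.norm_def, Complex.norm_def, h]
  refine ⟨hnorm, Subgroup.lowerCentralSeries_two_eq_bot_of_commutator_le_center ?_⟩
  refine QuotientGroup.commutator_le_center_of_mk_mem_center _ fun a ha => ?_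
  exact (Representation.asGroupHom V.ρ).mk_mem_center_of_map_mem_center
    (V.asGroupHom_mem_center_of_norm_character_eq (hnorm a ha))

/-- If `α` is a non-linear irreducible character of `G` (afforded by `V`) such that
`α ⬝ conj α` is a sum of linear characters, then `G' ≤ Z(α)` and `G/Ker α` is nilpotent
of class at most `2`. -/
theorem stmt10 (G : Type) [Group G] [Fintype G]
    (V : FDRep ℂ G) (hV : CategoryTheory.Simple V) (hnl : V.character 1 ≠ 1)
    (hsum : IsSumOfLinear G (fun g => V.character g * (starRingEnd ℂ) (V.character g))) :
    (↑(commutator G) : Set G) ⊆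
        {g : G | ‖V.character g‖ = ‖V.character 1‖} ∧
      (⊤ : Subgroup (G ⧸ repKer V)).lowerCentralSeries 2 = ⊥ :=
  stmt10_general G V hsum
end
end
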